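/- arXiv:2506.20121 — 2 statements merged into one kernel-verified Lean document; each statement's English description precedes it below -/
import Mathlib

section
/- Let ψ : ℝ^d → ℂ be a Schwartz function with ∂^α ψ(0) = 0 for every multi-index α. Then the function ξ ↦ log(|ξ|²) · ψ(ξ), defined for ξ ≠ 0 and extended by 0 at ξ = 0, is again a Schwartz function with all derivatives vanishing at the origin. -/
/-!
Away from the origin `log ‖ξ‖²` is smooth, and by Faà di Bruno its derivatives of order `≤ n` are
bounded by a power of the weight `1 + ‖ξ‖ + ‖ξ‖⁻¹`; by Leibniz the same holds for
`log ‖ξ‖² • ψ` relative to the derivatives of `ψ`. At infinity the weight grows polynomially,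
which the Schwartz decay of `ψ` absorbs. Near `0` it blows up polynomially, but flatness of `ψ`
and the mean value theorem give `Dʲψ(ξ) = O(‖ξ‖ᴺ)` for every `N`. So every derivative of the
product is `o(‖ξ‖)` at the origin, which lets it extend smoothly across `0` with all derivatives
vanishing there.
-/

open Asymptotics
open scoped ContDiff Nat Topology SchwartzMap

section FlatAtZero

variable {𝕜 E F : Type*} [NontriviallyNormedField 𝕜] [NormedAddCommGroup E] [NormedSpace 𝕜 E]
  [NormedAddCommGroup F] [NormedSpace 𝕜 F]

theorem hasFDerivAt_zero_of_isLittleO {g : E → F} (hg₀ : g 0 = 0)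
    (hg : g =o[𝓝[≠] 0] fun x => x) : HasFDerivAt g (0 : E →L[𝕜] F) 0 := by
  rw [hasFDerivAt_iff_isLittleO_nhds_zero, ← nhdsNE_sup_pure]
  simpa [hg₀] using hg.sup (isLittleO_pure.2 hg₀)

theorem iteratedFDeriv_at_zero_eq_zero_of_isLittleO {h : E → F} (h₀ : h 0 = 0)
    (hflat : ∀ n, iteratedFDeriv 𝕜 n h =o[𝓝[≠] 0] fun x => x) (n : ℕ) :
    iteratedFDeriv 𝕜 n h 0 = 0 := by
  induction n with
  | zero => ext; simp [h₀]
  | succ n ih =>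
    rw [iteratedFDeriv_succ_eq_comp_left, Function.comp_apply,
      (hasFDerivAt_zero_of_isLittleO ih (hflat n)).fderiv,
      LinearIsometryEquiv.map_zero]

theorem contDiff_of_isLittleO_iteratedFDeriv {h : E → F} (h₀ : h 0 = 0)
    (hs : ContDiffOn 𝕜 ∞ h {0}ᶜ) (hflat : ∀ n, iteratedFDeriv 𝕜 n h =o[𝓝[≠] 0] fun x => x) :
    ContDiff 𝕜 ∞ h := by
  refine contDiff_of_differentiable_iteratedFDeriv fun n _ x => ?_
  rcases eq_or_ne x 0 with rfl | hx
  · exact (hasFDerivAt_zero_of_isLittleO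
      (iteratedFDeriv_at_zero_eq_zero_of_isLittleO h₀ hflat n) (hflat n)).differentiableAt
  · exact (hs.contDiffAt (isOpen_compl_singleton.mem_nhds hx)).differentiableAt_iteratedFDeriv
      (WithTop.coe_lt_coe.2 (ENat.natCast_lt_top n))

end FlatAtZero

theorem Real.iteratedDeriv_succ_log (k : ℕ) :
    iteratedDeriv (k + 1) Real.log = fun t : ℝ => (-1) ^ k * k ! * t ^ (-1 - k : ℤ) := by
  rw [iteratedDeriv_succ', Real.deriv_log', iteratedDeriv_eq_iterate, iter_deriv_inv']

theorem Real.norm_iteratedFDeriv_succ_log (k : ℕ) (t : ℝ) :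
    ‖iteratedFDeriv ℝ (k + 1) Real.log t‖ = k ! * |t|⁻¹ ^ (k + 1) := by
  rw [norm_iteratedFDeriv_eq_norm_iteratedDeriv, Real.iteratedDeriv_succ_log]
  have : (-1 - k : ℤ) = -((k + 1 : ℕ) : ℤ) := by push_cast; ring
  simp only [norm_mul, norm_pow, norm_neg, norm_one, one_pow, one_mul, this, zpow_neg,
    zpow_natCast, norm_inv, Real.norm_eq_abs, inv_pow, Nat.abs_cast]

theorem Real.abs_log_sq_le {t : ℝ} (ht : 0 < t) : |Real.log (t ^ 2)| ≤ (1 + t + t⁻¹) ^ 2 := by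
  have hup := Real.log_le_sub_one_of_pos (pow_pos ht 2)
  have hlow := Real.log_le_sub_one_of_pos (inv_pos.2 (pow_pos ht 2))
  rw [Real.log_inv, ← inv_pow] at hlow
  have hinv := inv_pos.2 ht
  rw [abs_le]
  constructor <;> nlinarith

section LogNormSq

variable {E F : Type*} [NormedAddCommGroup E] [InnerProductSpace ℝ E]
  [NormedAddCommGroup F] [NormedSpace ℝ F]

theorem contDiffOn_log_norm_sq : ContDiffOn ℝ ∞ (fun y : E => Real.log (‖y‖ ^ 2)) {0}ᶜ :=
  Real.contDiffOn_log.comp (contDiff_norm_sq ℝ).contDiffOn fun y hy => by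
    simpa using hy

theorem exists_norm_iteratedFDeriv_log_norm_sq_le (n : ℕ) :
    ∃ C M, 0 ≤ C ∧ ∀ i ≤ n, ∀ x : E, x ≠ 0 →
      ‖iteratedFDeriv ℝ i (fun y => Real.log (‖y‖ ^ 2)) x‖ ≤ C * (1 + ‖x‖ + ‖x‖⁻¹) ^ M := by
  obtain ⟨k, C, hC, hsq⟩ :=
    (Function.hasTemperateGrowth_norm_sq E).norm_iteratedFDeriv_le_uniform n
  refine ⟨n ! * n ! * (1 + C) ^ n, 2 * n + 2 + k * n, by positivity, fun i hi x hx => ?_⟩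
  set w := 1 + ‖x‖ + ‖x‖⁻¹
  have hx' : 0 < ‖x‖ := norm_pos_iff.2 hx
  have hw : 1 ≤ w := by have := inv_pos.2 hx'; linarith
  have hinv : ‖x‖⁻¹ ≤ w := by linarith
  have hnorm : 1 + ‖x‖ ≤ w := by have := inv_pos.2 hx'; linarith
  have hlog : ∀ j ≤ i, ‖iteratedFDeriv ℝ j Real.log (‖x‖ ^ 2)‖ ≤ n ! * w ^ (2 * n + 2) := by
    rintro (_ | j) hj
    · rw [norm_iteratedFDeriv_zero, Real.norm_eq_abs]
      calc _ ≤ w ^ 2 := Real.abs_log_sq_le hx'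
        _ ≤ w ^ (2 * n + 2) := pow_le_pow_right₀ hw (by omega)
        _ ≤ n ! * w ^ (2 * n + 2) :=
          le_mul_of_one_le_left (by positivity) (Nat.one_le_cast.2 n.factorial_pos)
    · rw [Real.norm_iteratedFDeriv_succ_log, abs_of_pos (by positivity), ← inv_pow, ← pow_mul]
      calc _ ≤ (n ! : ℝ) * w ^ (2 * (j + 1)) := by gcongr; omega
        _ ≤ n ! * w ^ (2 * n + 2) := by gcongr; omega
  have hsq' : ∀ j, 1 ≤ j → j ≤ i →
      ‖iteratedFDeriv ℝ j (fun y : E => ‖y‖ ^ 2) x‖ ≤ ((1 + C) * w ^ k) ^ j := by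
    intro j hj hji
    calc _ ≤ C * (1 + ‖x‖) ^ k := hsq j (hji.trans hi) x
      _ ≤ (1 + C) * w ^ k := by gcongr; linarith
      _ ≤ _ := le_self_pow₀ (one_le_mul_of_one_le_of_one_le (by linarith) (one_le_pow₀ hw))
          (by omega)
  have hx₂ : ‖x‖ ^ 2 ∈ ({0}ᶜ : Set ℝ) := by simpa using hx
  have hcomp := norm_iteratedFDerivWithin_comp_le Real.contDiffOn_log
    (contDiff_norm_sq ℝ).contDiffOn (n := i) (mod_cast le_top)
    isOpen_compl_singleton.uniqueDiffOn isOpen_compl_singleton.uniqueDiffOn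
    (fun y (hy : y ≠ 0) => by simpa using hy) hx
    (fun j hj => by
      rw [iteratedFDerivWithin_of_isOpen j isOpen_compl_singleton hx₂]; exact hlog j hj)
    (fun j hj hji => by
      rw [iteratedFDerivWithin_of_isOpen j isOpen_compl_singleton hx]; exact hsq' j hj hji)
  rw [← iteratedFDerivWithin_of_isOpen i isOpen_compl_singleton hx]
  calc _ ≤ _ := hcomp
    _ ≤ n ! * (n ! * w ^ (2 * n + 2)) * ((1 + C) * w ^ k) ^ n := by
      gcongr
      exact one_le_mul_of_one_le_of_one_le (by linarith) (one_le_pow₀ hw)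
    _ = _ := by rw [mul_pow, ← pow_mul]; ring

theorem exists_norm_iteratedFDeriv_log_norm_sq_smul_le {ψ : E → F} (hψ : ContDiff ℝ ∞ ψ)
    (n : ℕ) : ∃ C M, 0 ≤ C ∧ ∀ x : E, x ≠ 0 → ∀ A, (∀ j ≤ n, ‖iteratedFDeriv ℝ j ψ x‖ ≤ A) →
      ‖iteratedFDeriv ℝ n (fun y => Real.log (‖y‖ ^ 2) • ψ y) x‖ ≤
        C * (1 + ‖x‖ + ‖x‖⁻¹) ^ M * A := by
  obtain ⟨C, M, hC, hlog⟩ := exists_norm_iteratedFDeriv_log_norm_sq_le (E := E) n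
  refine ⟨2 ^ n * C, M, by positivity, fun x hx A hA => ?_⟩
  have hs : IsOpen ({0}ᶜ : Set E) := isOpen_compl_singleton
  rw [← iteratedFDerivWithin_of_isOpen n hs hx]
  refine (norm_iteratedFDerivWithin_smul_le contDiffOn_log_norm_sq hψ.contDiffOn hs.uniqueDiffOn
    hx (mod_cast le_top)).trans ?_
  calc _ ≤ ∑ i ∈ Finset.range (n + 1), (n.choose i : ℝ) * (C * (1 + ‖x‖ + ‖x‖⁻¹) ^ M) * A := by
        gcongr with i hi
        · rw [iteratedFDerivWithin_of_isOpen i hs hx]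
          exact hlog i (by simpa [Nat.lt_succ_iff] using hi) x hx
        · rw [iteratedFDerivWithin_of_isOpen _ hs hx]
          exact hA _ (Nat.sub_le n i)
    _ = _ := by
      rw [← Finset.sum_mul, ← Finset.sum_mul, ← Nat.cast_sum, Nat.sum_range_choose]
      push_cast
      ring

end LogNormSq

namespace SchwartzMap

variable {E F : Type*} [NormedAddCommGroup E] [NormedSpace ℝ E]
  [NormedAddCommGroup F] [NormedSpace ℝ F]

theorem norm_iteratedFDeriv_le_seminorm_mul_pow_of_flat (ψ : 𝓢(E, F))
    (hψ : ∀ n, iteratedFDeriv ℝ n ψ 0 = 0) (k n : ℕ) (x : E) :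
    ‖iteratedFDeriv ℝ n ψ x‖ ≤ SchwartzMap.seminorm ℝ 0 (n + k) ψ * ‖x‖ ^ k := by
  induction k generalizing n x with
  | zero => simpa using ψ.norm_iteratedFDeriv_le_seminorm ℝ n x
  | succ k ih =>
    have hderiv : ∀ y ∈ Metric.closedBall (0 : E) ‖x‖,
        ‖fderiv ℝ (iteratedFDeriv ℝ n ψ) y‖ ≤
          SchwartzMap.seminorm ℝ 0 (n + (k + 1)) ψ * ‖x‖ ^ k := by
      intro y hy
      rw [norm_fderiv_iteratedFDeriv, show n + (k + 1) = n + 1 + k by ring]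
      refine (ih (n + 1) y).trans ?_
      gcongr
      simpa using hy
    have := (convex_closedBall (0 : E) ‖x‖).norm_image_sub_le_of_norm_fderiv_le (x := 0) (y := x)
      (fun y _ => (ψ.smooth ⊤).differentiable_iteratedFDeriv (mod_cast ENat.natCast_lt_top n) y)
      hderiv (by simp) (mem_closedBall_zero_iff.2 le_rfl)
    rw [hψ n, sub_zero, sub_zero, mul_assoc, ← pow_succ] at this
    exact this

end SchwartzMap

section LogNormSqSmul

variable {E F : Type*} [NormedAddCommGroup E] [InnerProductSpace ℝ E]
  [NormedAddCommGroup F] [NormedSpace ℝ F]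

theorem exists_norm_iteratedFDeriv_log_norm_sq_smul_le_of_norm_le_one (ψ : 𝓢(E, F))
    (hψ : ∀ n, iteratedFDeriv ℝ n ψ 0 = 0) (n : ℕ) :
    ∃ K, ∀ x : E, x ≠ 0 → ‖x‖ ≤ 1 →
      ‖iteratedFDeriv ℝ n (fun y => Real.log (‖y‖ ^ 2) • ψ y) x‖ ≤ K * ‖x‖ ^ 2 := by
  obtain ⟨C, M, hC, hbound⟩ := exists_norm_iteratedFDeriv_log_norm_sq_smul_le ψ.smooth' n
  set S := ∑ j ∈ Finset.range (n + 1), SchwartzMap.seminorm ℝ 0 (j + (M + 2)) ψ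
  have hS : 0 ≤ S := Finset.sum_nonneg fun _ _ => apply_nonneg _ _
  refine ⟨C * 3 ^ M * S, fun x hx hx1 => ?_⟩
  have hx' : 0 < ‖x‖ := norm_pos_iff.2 hx
  have hw : 1 + ‖x‖ + ‖x‖⁻¹ ≤ 3 * ‖x‖⁻¹ := by
    have := one_le_inv_iff₀.2 ⟨hx', hx1⟩; linarith
  have hA : ∀ j ≤ n, ‖iteratedFDeriv ℝ j ψ x‖ ≤ S * ‖x‖ ^ (M + 2) := fun j hj =>
    (ψ.norm_iteratedFDeriv_le_seminorm_mul_pow_of_flat hψ (M + 2) j x).trans <| by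
      gcongr
      exact Finset.single_le_sum (f := fun j => SchwartzMap.seminorm ℝ 0 (j + (M + 2)) ψ)
        (fun _ _ => apply_nonneg _ _) (Finset.mem_range_succ_iff.2 hj)
  calc _ ≤ C * (1 + ‖x‖ + ‖x‖⁻¹) ^ M * (S * ‖x‖ ^ (M + 2)) := hbound x hx _ hA
    _ ≤ C * (3 * ‖x‖⁻¹) ^ M * (S * ‖x‖ ^ (M + 2)) := by gcongr
    _ = C * 3 ^ M * S * ‖x‖ ^ 2 := by
      rw [mul_pow, inv_pow, pow_add]; field_simp

theorem exists_pow_mul_norm_iteratedFDeriv_log_norm_sq_smul_le_of_one_le_norm (ψ : 𝓢(E, F))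
    (k n : ℕ) :
    ∃ K, ∀ x : E, 1 ≤ ‖x‖ →
      ‖x‖ ^ k * ‖iteratedFDeriv ℝ n (fun y => Real.log (‖y‖ ^ 2) • ψ y) x‖ ≤ K := by
  obtain ⟨C, M, hC, hbound⟩ := exists_norm_iteratedFDeriv_log_norm_sq_smul_le ψ.smooth' n
  set S := ∑ j ∈ Finset.range (n + 1), SchwartzMap.seminorm ℝ (k + M) j ψ
  have hS : 0 ≤ S := Finset.sum_nonneg fun _ _ => apply_nonneg _ _
  refine ⟨C * 3 ^ M * S, fun x hx1 => ?_⟩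
  have hx' : 0 < ‖x‖ := by linarith
  have hx : x ≠ 0 := norm_pos_iff.1 hx'
  have hw : 1 + ‖x‖ + ‖x‖⁻¹ ≤ 3 * ‖x‖ := by
    have := inv_le_one_of_one_le₀ hx1; linarith
  have hA : ∀ j ≤ n, ‖iteratedFDeriv ℝ j ψ x‖ ≤ S / ‖x‖ ^ (k + M) := fun j hj => by
    rw [le_div_iff₀ (by positivity), mul_comm]
    exact (ψ.le_seminorm ℝ (k + M) j x).trans
      (Finset.single_le_sum (f := fun j => SchwartzMap.seminorm ℝ (k + M) j ψ)
        (fun _ _ => apply_nonneg _ _) (Finset.mem_range_succ_iff.2 hj))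
  calc _ ≤ ‖x‖ ^ k * (C * (1 + ‖x‖ + ‖x‖⁻¹) ^ M * (S / ‖x‖ ^ (k + M))) := by
        gcongr; exact hbound x hx _ hA
    _ ≤ ‖x‖ ^ k * (C * (3 * ‖x‖) ^ M * (S / ‖x‖ ^ (k + M))) := by gcongr
    _ = C * 3 ^ M * S := by
      rw [mul_pow, pow_add]; field_simp

-- At `x = 0` the right-hand side is `0` because `Real.log 0 = 0`.
theorem exists_schwartzMap_eq_log_norm_sq_smul (ψ : 𝓢(E, F))
    (hψ : ∀ n, iteratedFDeriv ℝ n ψ 0 = 0) :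
    ∃ g : 𝓢(E, F), (∀ x, g x = Real.log (‖x‖ ^ 2) • ψ x) ∧ ∀ n, iteratedFDeriv ℝ n g 0 = 0 := by
  set f := fun y : E => Real.log (‖y‖ ^ 2) • ψ y
  have hf₀ : f 0 = 0 := by simp [f]
  have hflat : ∀ n, iteratedFDeriv ℝ n f =o[𝓝[≠] 0] fun x => x := fun n => by
    obtain ⟨K, hK⟩ := exists_norm_iteratedFDeriv_log_norm_sq_smul_le_of_norm_le_one ψ hψ n
    refine (IsBigO.of_bound K ?_).trans_isLittleO
      ((isLittleO_norm_pow_id one_lt_two).mono nhdsWithin_le_nhds)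
    filter_upwards [self_mem_nhdsWithin,
      nhdsWithin_le_nhds (Metric.closedBall_mem_nhds (0 : E) one_pos)] with x hx hx1
    rw [norm_pow, norm_norm]
    exact hK x hx (mem_closedBall_zero_iff.1 hx1)
  have hzero := iteratedFDeriv_at_zero_eq_zero_of_isLittleO hf₀ hflat
  have hdecay : ∀ k n : ℕ, ∃ C, ∀ x, ‖x‖ ^ k * ‖iteratedFDeriv ℝ n f x‖ ≤ C := fun k n => by
    obtain ⟨K₁, hK₁⟩ := exists_norm_iteratedFDeriv_log_norm_sq_smul_le_of_norm_le_one ψ hψ n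
    obtain ⟨K₂, hK₂⟩ :=
      exists_pow_mul_norm_iteratedFDeriv_log_norm_sq_smul_le_of_one_le_norm ψ k n
    refine ⟨max (max K₁ 0) K₂, fun x => ?_⟩
    rcases eq_or_ne x 0 with rfl | hx
    · simp [hzero n]
    rcases le_total ‖x‖ 1 with hx1 | hx1
    · calc _ ≤ 1 * (max K₁ 0 * ‖x‖ ^ 2) :=
            mul_le_mul (pow_le_one₀ (norm_nonneg _) hx1)
              ((hK₁ x hx hx1).trans (by gcongr; exact le_max_left _ _)) (norm_nonneg _) zero_le_one
        _ ≤ max K₁ 0 := by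
          rw [one_mul]
          exact mul_le_of_le_one_right (le_max_right _ _) (pow_le_one₀ (norm_nonneg _) hx1)
        _ ≤ _ := le_max_left _ _
    · exact (hK₂ x hx1).trans (le_max_right _ _)
  exact ⟨⟨f, contDiff_of_isLittleO_iteratedFDeriv hf₀
    (contDiffOn_log_norm_sq.smul ψ.smooth'.contDiffOn) hflat, hdecay⟩, fun _ => rfl, hzero⟩

end LogNormSqSmul

/-- Let `ψ` be a Schwartz function on `ℝ^d` with all derivatives vanishing at the
origin. Then `ξ ↦ log(‖ξ‖²) ψ(ξ)` (extended by `0` at `ξ = 0`) is again a Schwartz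
function with all derivatives vanishing at the origin. -/
theorem log_symbol_mul_preserves_Psi (d : ℕ)
    (ψ : SchwartzMap (EuclideanSpace ℝ (Fin d)) ℂ)
    (hψ : ∀ n : ℕ, iteratedFDeriv ℝ n (⇑ψ) 0 = 0) :
    ∃ g : SchwartzMap (EuclideanSpace ℝ (Fin d)) ℂ,
      (∀ ξ : EuclideanSpace ℝ (Fin d), ξ ≠ 0 →
        g ξ = (Real.log (‖ξ‖ ^ 2) : ℂ) * ψ ξ) ∧
      g 0 = 0 ∧
      (∀ n : ℕ, iteratedFDeriv ℝ n (⇑g) 0 = 0) := by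
  obtain ⟨g, hg, hg₀⟩ := exists_schwartzMap_eq_log_norm_sq_smul ψ hψ
  exact ⟨g, fun ξ _ => by rw [hg, Complex.real_smul], by simp [hg], hg₀⟩
end

section
/- In dimension d = 2, for every x ∈ ℝ² with |x| > 0, the integral ∫_2^∞ r J_0(r|x|)/(r² - 1) dr converges, and there is a constant C > 0 such that |∫_2^∞ r J_0(r|x|)/(r² - 1) dr| ≤ C |x|^{-1/2} for all |x| ≥ 2. -/
/-!
Bessel's integral gives `J₀(s) = (2/π) ∫_0^{π/2} cos (s sin θ) dθ`. Away from the stationary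
point `π/2` the phase `s sin θ` is concave with derivative at least `s sin δ` on `[0, π/2 - δ]`,
so one integration by parts bounds that part by `2/(s sin δ)`, while the window of width `δ`
around `π/2` contributes at most `δ`. Taking `δ = s^{-1/2}` gives `|J₀(s)| ≤ 3 s^{-1/2}`, so for
`|x| ≥ 1/2` the integrand is at most `4 |x|^{-1/2} r^{-3/2}`, whose integral over `(2, ∞)` is
`O(|x|^{-1/2})`.
-/

/-- The Bessel function of the first kind of integer order `n`, via Bessel's
integral representation `J_n(s) = (1/π) ∫_0^π cos(nθ - s sin θ) dθ`. -/
noncomputable def besselJ (n : ℕ) (s : ℝ) : ℝ :=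
  (1 / Real.pi) * ∫ θ in (0:ℝ)..Real.pi, Real.cos (n * θ - s * Real.sin θ)

open Real MeasureTheory intervalIntegral Set

theorem abs_integral_cos_le_of_concave_phase {φ φ' φ'' : ℝ → ℝ} {a b : ℝ} (hab : a ≤ b)
    (hφ : ∀ x, HasDerivAt φ (φ' x) x) (hφ' : ∀ x, HasDerivAt φ' (φ'' x) x)
    (hφ''_cont : Continuous φ'') (hpos : ∀ x ∈ Icc a b, 0 < φ' x)
    (hconc : ∀ x ∈ Icc a b, φ'' x ≤ 0) :
    |∫ x in a..b, cos (φ x)| ≤ 2 / φ' b := by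
  have hφ_cont : Continuous φ := continuous_iff_continuousAt.2 fun x ↦ (hφ x).continuousAt
  have hφ'_cont : Continuous φ' := continuous_iff_continuousAt.2 fun x ↦ (hφ' x).continuousAt
  set u : ℝ → ℝ := fun x ↦ (φ' x)⁻¹
  set u' : ℝ → ℝ := fun x ↦ -φ'' x / φ' x ^ 2
  have hu : ∀ x ∈ uIcc a b, HasDerivAt u (u' x) x := fun x hx ↦ by
    rw [uIcc_of_le hab] at hx
    exact (hφ' x).inv (hpos x hx).ne'
  have hv : ∀ x ∈ uIcc a b, HasDerivAt (fun x ↦ sin (φ x)) (cos (φ x) * φ' x) x :=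
    fun x _ ↦ (hφ x).sin
  have hu'_int : IntervalIntegrable u' volume a b := by
    refine ContinuousOn.intervalIntegrable (ContinuousOn.div (by fun_prop) (by fun_prop) ?_)
    intro x hx
    rw [uIcc_of_le hab] at hx
    exact pow_ne_zero _ (hpos x hx).ne'
  have hv'_int : IntervalIntegrable (fun x ↦ cos (φ x) * φ' x) volume a b :=
    (by fun_prop : Continuous fun x ↦ cos (φ x) * φ' x).intervalIntegrable a b
  have hcos : ∫ x in a..b, cos (φ x) = ∫ x in a..b, u x * (cos (φ x) * φ' x) := by
    refine integral_congr fun x hx ↦ ?_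
    rw [uIcc_of_le hab] at hx
    simp only [u]
    field_simp [(hpos x hx).ne']
  have hu'_nonneg : ∀ x ∈ Icc a b, 0 ≤ u' x := fun x hx ↦
    div_nonneg (neg_nonneg.2 (hconc x hx)) (sq_nonneg _)
  have hremainder : |∫ x in a..b, u' x * sin (φ x)| ≤ u b - u a := by
    calc |∫ x in a..b, u' x * sin (φ x)| ≤ ∫ x in a..b, u' x := by
          rw [← norm_eq_abs]
          refine intervalIntegral.norm_integral_le_of_norm_le hab (.of_forall fun x hx ↦ ?_) hu'_int
          have hx' := hu'_nonneg x (Ioc_subset_Icc_self hx)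
          rw [norm_mul, norm_of_nonneg hx']
          exact mul_le_of_le_one_right hx' (abs_sin_le_one _)
      _ = u b - u a := integral_eq_sub_of_hasDerivAt hu hu'_int
  have hua : 0 < u a := inv_pos.2 (hpos a (left_mem_Icc.2 hab))
  have hub : 0 < u b := inv_pos.2 (hpos b (right_mem_Icc.2 hab))
  have hboundary : ∀ x, 0 < u x → |u x * sin (φ x)| ≤ u x := fun x hx ↦ by
    rw [abs_mul, abs_of_pos hx]
    exact mul_le_of_le_one_right hx.le (abs_sin_le_one _)
  -- `cos φ = (1/φ') (sin φ)'`; after integrating by parts, `(1/φ')' ≥ 0` makes the remainder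
  -- telescope.
  rw [hcos, integral_mul_deriv_eq_deriv_mul hu hv hu'_int hv'_int]
  calc |u b * sin (φ b) - u a * sin (φ a) - ∫ x in a..b, u' x * sin (φ x)|
      ≤ |u b * sin (φ b)| + |u a * sin (φ a)| + |∫ x in a..b, u' x * sin (φ x)| :=
        (abs_sub _ _).trans (by gcongr; exact abs_sub _ _)
    _ ≤ u b + u a + (u b - u a) := by gcongr <;> exact hboundary _ ‹_›
    _ = 2 / φ' b := by simp only [u]; ring

theorem continuous_besselJ (n : ℕ) : Continuous (besselJ n) :=
  continuous_const.mul <| continuous_parametric_intervalIntegral_of_continuous'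
    (by fun_prop : Continuous fun p : ℝ × ℝ ↦ cos (n * p.2 - p.1 * sin p.2)) 0 π

theorem besselJ_zero_eq (s : ℝ) : besselJ 0 s = π⁻¹ * ∫ θ in 0..π, cos (s * sin θ) := by
  simp [besselJ]

theorem integral_comp_sin_eq_two_mul {f : ℝ → ℝ} (hf : Continuous f) :
    ∫ θ in 0..π, f (sin θ) = 2 * ∫ θ in 0..π / 2, f (sin θ) := by
  have hint : ∀ a b, IntervalIntegrable (fun θ ↦ f (sin θ)) volume a b :=
    fun a b ↦ (by fun_prop : Continuous fun θ ↦ f (sin θ)).intervalIntegrable a b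
  have hreflect : ∫ θ in π / 2..π, f (sin θ) = ∫ θ in 0..π / 2, f (sin θ) := by
    have := integral_comp_sub_left (a := 0) (b := π / 2) (fun θ ↦ f (sin θ)) π
    simp only [sin_pi_sub, sub_zero, show π - π / 2 = π / 2 by ring] at this
    exact this.symm
  rw [← integral_add_adjacent_intervals (hint 0 (π / 2)) (hint (π / 2) π), hreflect, two_mul]

theorem abs_integral_cos_mul_sin_le {s δ : ℝ} (hs : 0 < s) (hδ : 0 < δ) (hδπ : δ ≤ π / 2) :
    |∫ θ in 0..π / 2, cos (s * sin θ)| ≤ 2 / (s * sin δ) + δ := by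
  have hint : ∀ a b, IntervalIntegrable (fun θ ↦ cos (s * sin θ)) volume a b :=
    fun a b ↦ (by fun_prop : Continuous fun θ ↦ cos (s * sin θ)).intervalIntegrable a b
  have hoscillating : |∫ θ in 0..π / 2 - δ, cos (s * sin θ)| ≤ 2 / (s * sin δ) := by
    have h := abs_integral_cos_le_of_concave_phase (a := 0) (b := π / 2 - δ) (φ := fun θ ↦ s * sin θ)
      (φ'' := fun θ ↦ s * -sin θ) (by linarith) (fun θ ↦ (hasDerivAt_sin θ).const_mul s)
      (fun θ ↦ (hasDerivAt_cos θ).const_mul s) (by fun_prop) ?_ ?_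
    · rwa [cos_pi_div_two_sub] at h
    · rintro θ ⟨hθ₀, hθ⟩
      exact mul_pos hs (cos_pos_of_mem_Ioo ⟨by linarith [pi_pos], by linarith⟩)
    · rintro θ ⟨hθ₀, hθ⟩
      exact mul_nonpos_of_nonneg_of_nonpos hs.le
        (neg_nonpos.2 (sin_nonneg_of_nonneg_of_le_pi hθ₀ (by linarith [pi_pos])))
  have hstationary : |∫ θ in π / 2 - δ..π / 2, cos (s * sin θ)| ≤ δ := by
    have := norm_integral_le_of_norm_le_const (a := π / 2 - δ) (b := π / 2) (C := 1)
      (f := fun θ ↦ cos (s * sin θ)) fun θ _ ↦ abs_cos_le_one _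
    rwa [one_mul, sub_sub_cancel, abs_of_pos hδ] at this
  rw [← integral_add_adjacent_intervals (hint 0 (π / 2 - δ)) (hint (π / 2 - δ) (π / 2))]
  exact (abs_add_le _ _).trans (add_le_add hoscillating hstationary)

theorem abs_besselJ_zero_le {s : ℝ} (hs : 1 ≤ s) : |besselJ 0 s| ≤ 3 * s ^ (-(1:ℝ) / 2) := by
  have hs₀ : 0 < s := one_pos.trans_le hs
  set δ := s ^ (-(1:ℝ) / 2)
  have hδ : 0 < δ := rpow_pos_of_pos hs₀ _
  have hδπ : δ ≤ π / 2 :=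
    (rpow_le_one_of_one_le_of_nonpos hs (by norm_num)).trans (by linarith [pi_gt_three])
  have hsδ : s * δ * δ = 1 := by
    rw [mul_assoc, ← rpow_add hs₀, show -(1:ℝ) / 2 + -(1:ℝ) / 2 = -1 by norm_num, rpow_neg_one,
      mul_inv_cancel₀ hs₀.ne']
  -- Jordan's inequality `sin δ ≥ 2δ/π` and `s δ² = 1` turn the oscillatory bound into `π δ`.
  have hoscillating : 2 / (s * sin δ) ≤ π * δ := by
    have hsin := mul_le_sin hδ.le hδπ
    rw [div_le_iff₀ (mul_pos hs₀ (sin_pos_of_pos_of_lt_pi hδ (by linarith [pi_pos]))), show (2:ℝ) = π * δ * (s * (2 / π * δ)) by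
      field_simp; linarith]
    gcongr
  rw [besselJ_zero_eq, integral_comp_sin_eq_two_mul (f := fun t ↦ cos (s * t)) (by fun_prop),
    abs_mul, abs_mul, abs_of_pos (inv_pos.2 pi_pos), abs_two]
  calc π⁻¹ * (2 * |∫ θ in 0..π / 2, cos (s * sin θ)|) ≤ π⁻¹ * (2 * (π * δ + δ)) := by
        gcongr
        exact (abs_integral_cos_mul_sin_le hs₀ hδ hδπ).trans (by gcongr)
    _ ≤ 3 * δ := by
        field_simp
        nlinarith [pi_gt_three]

noncomputable def helmholtzTailIntegrand (a r : ℝ) : ℝ := r * besselJ 0 (r * a) / (r ^ 2 - 1)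

theorem continuousOn_helmholtzTailIntegrand (a : ℝ) :
    ContinuousOn (helmholtzTailIntegrand a) (Ici 2) := by
  have := continuous_besselJ 0
  refine ContinuousOn.div (by fun_prop) (by fun_prop) fun r (hr : 2 ≤ r) ↦ ?_
  nlinarith

theorem abs_helmholtzTailIntegrand_le {a r : ℝ} (ha : 0 < a) (hr : 2 ≤ r) (hra : 1 ≤ r * a) :
    |helmholtzTailIntegrand a r| ≤ 4 * a ^ (-(1:ℝ) / 2) * r ^ (-(3:ℝ) / 2) := by
  have hr₀ : 0 < r := by linarith
  have hden : 0 < r ^ 2 - 1 := by nlinarith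
  have hweight : r / (r ^ 2 - 1) ≤ 4 / 3 * r ^ (-(1:ℝ)) := by
    rw [rpow_neg_one, div_le_iff₀ hden]
    field_simp
    nlinarith
  calc |helmholtzTailIntegrand a r| = |besselJ 0 (r * a)| * (r / (r ^ 2 - 1)) := by
        rw [helmholtzTailIntegrand, abs_div, abs_mul, abs_of_pos hr₀, abs_of_pos hden]
        ring
    _ ≤ 3 * (r * a) ^ (-(1:ℝ) / 2) * (4 / 3 * r ^ (-(1:ℝ))) := by
        gcongr
        exact abs_besselJ_zero_le hra
    _ = 4 * a ^ (-(1:ℝ) / 2) * (r ^ (-(1:ℝ) / 2) * r ^ (-(1:ℝ))) := by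
        rw [mul_rpow hr₀.le ha.le]
        ring
    _ = 4 * a ^ (-(1:ℝ) / 2) * r ^ (-(3:ℝ) / 2) := by
        rw [← rpow_add hr₀]
        norm_num

theorem integrableOn_Ioi_helmholtzTailIntegrand {a R : ℝ} (ha : 0 < a) (hR : 2 ≤ R)
    (hRa : 1 ≤ R * a) : IntegrableOn (helmholtzTailIntegrand a) (Ioi R) := by
  refine Integrable.mono' ((integrableOn_Ioi_rpow_of_lt (a := -(3:ℝ) / 2) (by norm_num) (by linarith)).const_mul
    (4 * a ^ (-(1:ℝ) / 2))) ((continuousOn_helmholtzTailIntegrand a).mono ?_ |>.aestronglyMeasurable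
    measurableSet_Ioi) ?_
  · exact fun r (hr : R < r) ↦ hR.trans hr.le
  · filter_upwards [ae_restrict_mem measurableSet_Ioi] with r (hr : R < r)
    exact abs_helmholtzTailIntegrand_le ha (hR.trans hr.le) (hRa.trans (by gcongr))

theorem integrableOn_helmholtzTailIntegrand {a : ℝ} (ha : 0 < a) :
    IntegrableOn (helmholtzTailIntegrand a) (Ioi 2) := by
  set R := max 2 a⁻¹
  have hR : 2 ≤ R := le_max_left _ _
  rw [← Ioc_union_Ioi_eq_Ioi hR]
  refine IntegrableOn.union ?_ (integrableOn_Ioi_helmholtzTailIntegrand ha hR ?_)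
  · exact ((continuousOn_helmholtzTailIntegrand a).mono Icc_subset_Ici_self).integrableOn_Icc
      |>.mono_set Ioc_subset_Icc_self
  · calc (1:ℝ) = a⁻¹ * a := (inv_mul_cancel₀ ha.ne').symm
      _ ≤ R * a := by gcongr; exact le_max_right _ _

theorem abs_integral_helmholtzTailIntegrand_le {a : ℝ} (ha : 0 < a) (h2a : 1 ≤ 2 * a) :
    |∫ r in Ioi 2, helmholtzTailIntegrand a r| ≤ 8 * a ^ (-(1:ℝ) / 2) := by
  have hmajorant : ∫ r in Ioi (2:ℝ), 4 * a ^ (-(1:ℝ) / 2) * r ^ (-(3:ℝ) / 2)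
      = 8 * a ^ (-(1:ℝ) / 2) * (2:ℝ) ^ (-(1:ℝ) / 2) := by
    rw [MeasureTheory.integral_const_mul, integral_Ioi_rpow_of_lt (by norm_num) (by norm_num)]
    norm_num
    ring
  calc |∫ r in Ioi 2, helmholtzTailIntegrand a r|
      ≤ ∫ r in Ioi (2:ℝ), 4 * a ^ (-(1:ℝ) / 2) * r ^ (-(3:ℝ) / 2) := by
        rw [← norm_eq_abs]
        refine norm_integral_le_of_norm_le
          ((integrableOn_Ioi_rpow_of_lt (a := -(3:ℝ) / 2) (c := 2) (by norm_num) (by norm_num)).const_mul _) ?_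
        filter_upwards [ae_restrict_mem measurableSet_Ioi] with r (hr : 2 < r)
        exact abs_helmholtzTailIntegrand_le ha hr.le (h2a.trans (by gcongr))
    _ = 8 * a ^ (-(1:ℝ) / 2) * (2:ℝ) ^ (-(1:ℝ) / 2) := hmajorant
    _ ≤ 8 * a ^ (-(1:ℝ) / 2) := by
        refine mul_le_of_le_one_right (by positivity) ?_
        exact rpow_le_one_of_one_le_of_nonpos (by norm_num) (by norm_num)

/-- In dimension 2: for every `x ≠ 0` the integral `∫_2^∞ r J_0(r‖x‖)/(r²-1) dr`
converges, and it is bounded by `C ‖x‖^{-1/2}` for `‖x‖ ≥ 2`. -/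
theorem helmholtz_tail_integral_bound :
    (∀ x : EuclideanSpace ℝ (Fin 2), 0 < ‖x‖ →
      MeasureTheory.IntegrableOn
        (fun r : ℝ => r * besselJ 0 (r * ‖x‖) / (r ^ 2 - 1)) (Set.Ioi 2)) ∧
    ∃ C : ℝ, 0 < C ∧ ∀ x : EuclideanSpace ℝ (Fin 2), 2 ≤ ‖x‖ →
      |∫ r in Set.Ioi (2:ℝ), r * besselJ 0 (r * ‖x‖) / (r ^ 2 - 1)|
        ≤ C * ‖x‖ ^ (-(1:ℝ)/2) :=
  ⟨fun _ hx ↦ integrableOn_helmholtzTailIntegrand hx, 8, by norm_num, fun _ hx ↦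
    abs_integral_helmholtzTailIntegrand_le (by linarith) (by linarith)⟩
end
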